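/- Let P be a closed subgroup of Isom(T_{q+1})_ω and suppose there is a vertex v such that for every child w of v there exists x ∈ P with x(v) = w. Then P acts transitively on the vertex set of T_{q+1}, i.e. P is a scale group. -/

import Mathlib

namespace Scale

/-- A vertex of the `(q+1)`-regular tree `T_{q+1}`: a level `n ∈ ℤ` together with a
labelling `ℤ → Fin q` which vanishes above the level and for all sufficiently small indices. -/
@[ext] structure Vertex (q : ℕ) where
  level : ℤ
  lab : ℤ → Fin q
  zero_gt : ∀ i : ℤ, level < i → (lab i : ℕ) = 0
  bdd : ∃ N : ℤ, ∀ i : ℤ, i < N → (lab i : ℕ) = 0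

namespace Vertex

variable {q : ℕ} [NeZero q]

/-- The parent `v⁺` of a vertex. -/
def parent (v : Vertex q) : Vertex q where
  level := v.level - 1
  lab := fun i => if v.level - 1 < i then 0 else v.lab i
  zero_gt := by intro i hi; simp [hi]
  bdd := by
    obtain ⟨N, hN⟩ := v.bdd
    refine ⟨N, fun i hi => ?_⟩
    by_cases h : v.level - 1 < i
    · simp [h]
    · simp [h, hN i hi]

/-- The child `vj` of a vertex `v`. -/
def child (v : Vertex q) (j : Fin q) : Vertex q where
  level := v.level + 1
  lab := fun i => if i = v.level + 1 then j else v.lab i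
  zero_gt := by
    intro i hi
    have h1 : i ≠ v.level + 1 := by omega
    simp [h1, v.zero_gt i (by omega)]
  bdd := by
    obtain ⟨N, hN⟩ := v.bdd
    refine ⟨min N (v.level + 1), fun i hi => ?_⟩
    have h1 : i < N := lt_of_lt_of_le hi (min_le_left _ _)
    have h2 : i < v.level + 1 := lt_of_lt_of_le hi (min_le_right _ _)
    have h3 : i ≠ v.level + 1 := by omega
    simp [h3, hN i h1]

/-- The restriction `w|_m` of a vertex to level `m`. -/
def trunc (v : Vertex q) (m : ℤ) : Vertex q where
  level := m
  lab := fun i => if m < i then 0 else v.lab i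
  zero_gt := by intro i hi; simp [hi]
  bdd := by
    obtain ⟨N, hN⟩ := v.bdd
    refine ⟨N, fun i hi => ?_⟩
    by_cases h : m < i
    · simp [h]
    · simp [h, hN i hi]

/-- `w` is a descendant of `u` (in the rooted subtree `T_u`). -/
def Descendant (u w : Vertex q) : Prop := u.level ≤ w.level ∧ trunc w u.level = u

end Vertex

/-- The all-zero vertex `ṽ_n` at level `n`. -/
def zeroVtx (q : ℕ) [NeZero q] (n : ℤ) : Vertex q where
  level := n
  lab := fun _ => 0
  zero_gt := by intro i _; simp
  bdd := ⟨0, by intro i _; simp⟩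

/-- The map shifting all labels by `k` (a translation towards the end `ω` when `k > 0`). -/
def shiftMap {q : ℕ} (k : ℤ) (v : Vertex q) : Vertex q where
  level := v.level + k
  lab := fun i => v.lab (i - k)
  zero_gt := fun i hi => v.zero_gt (i - k) (by omega)
  bdd := by
    obtain ⟨N, hN⟩ := v.bdd
    exact ⟨N + k, fun i hi => hN (i - k) (by omega)⟩

/-- The translation `x̃₀ᵏ` of `T_{q+1}` as a permutation of the vertices. -/
def shiftPerm (q : ℕ) (k : ℤ) : Equiv.Perm (Vertex q) where
  toFun := shiftMap k
  invFun := shiftMap (-k)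
  left_inv := by
    intro v
    refine Vertex.ext ?_ ?_
    · show v.level + k + -k = v.level
      omega
    · funext i
      show v.lab (i - -k - k) = v.lab i
      congr 1
      omega
  right_inv := by
    intro v
    refine Vertex.ext ?_ ?_
    · show v.level + -k + k = v.level
      omega
    · funext i
      show v.lab (i - k - -k) = v.lab i
      congr 1
      omega

/-- The group `Isom(T_{q+1})_ω` of tree automorphisms fixing the distinguished end `ω`,
realised as the subgroup of permutations of the vertex set commuting with `parent`. -/
def IsomOmega (q : ℕ) [NeZero q] : Subgroup (Equiv.Perm (Vertex q)) where
  carrier := {x | ∀ v : Vertex q, x (Vertex.parent v) = Vertex.parent (x v)}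
  one_mem' := fun _ => rfl
  mul_mem' := by
    intro a b ha hb v
    show (a * b) (Vertex.parent v) = Vertex.parent ((a * b) v)
    rw [Equiv.Perm.mul_apply, Equiv.Perm.mul_apply, hb, ha]
  inv_mem' := by
    intro a ha v
    show a⁻¹ (Vertex.parent v) = Vertex.parent (a⁻¹ v)
    have h := ha (a⁻¹ v)
    rw [show a (a⁻¹ v) = v from Equiv.apply_symm_apply a v] at h
    rw [← h, show a⁻¹ (a (Vertex.parent (a⁻¹ v))) = Vertex.parent (a⁻¹ v) from
      Equiv.symm_apply_apply a _]

/-- The level shift `n(x)` of an automorphism (evaluated at the zero vertex; for members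
of `IsomOmega q` the shift is the same at every vertex). -/
def lshift {q : ℕ} [NeZero q] (x : Equiv.Perm (Vertex q)) : ℤ := (x (zeroVtx q 0)).level

/-- An automorphism is elliptic if it fixes a vertex. -/
def Elliptic {q : ℕ} (x : Equiv.Perm (Vertex q)) : Prop := ∃ v : Vertex q, x v = v

/-- Topology of pointwise convergence on `X → X` for `X` discrete. -/
def funTop (X : Type*) : TopologicalSpace (X → X) :=
  @Pi.topologicalSpace X (fun _ => X) (fun _ => ⊥)

/-- The permutation topology on `Equiv.Perm X`: pointwise stabilisers of finite sets of
points form a neighbourhood basis of the identity. -/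
def permTop (X : Type*) : TopologicalSpace (Equiv.Perm X) :=
  @TopologicalSpace.induced (Equiv.Perm X) ((X → X) × (X → X))
    (fun g => ((g : X → X), ((g⁻¹ : Equiv.Perm X) : X → X)))
    (@instTopologicalSpaceProd _ _ (funTop X) (funTop X))

instance (q : ℕ) : TopologicalSpace (Equiv.Perm (Vertex q)) := permTop _

instance (q : ℕ) : TopologicalSpace (Equiv.Perm (List (Fin q))) := permTop _

/-- A scale group: a closed subgroup of `Isom(T_{q+1})_ω` acting transitively on vertices. -/
def IsScaleGroup {q : ℕ} [NeZero q] (P : Subgroup (Equiv.Perm (Vertex q))) : Prop :=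
  P ≤ IsomOmega q ∧ IsClosed (P : Set (Equiv.Perm (Vertex q))) ∧
    ∀ v w : Vertex q, ∃ x ∈ P, x v = w

/-- The stabiliser of the vertex `v` in `P`, as a subgroup of the ambient permutation group. -/
def stabIn {q : ℕ} (P : Subgroup (Equiv.Perm (Vertex q))) (v : Vertex q) :
    Subgroup (Equiv.Perm (Vertex q)) where
  carrier := {g | g ∈ P ∧ g v = v}
  one_mem' := ⟨P.one_mem, rfl⟩
  mul_mem' := by
    intro a b ha hb
    exact ⟨P.mul_mem ha.1 hb.1, by rw [Equiv.Perm.mul_apply, hb.2, ha.2]⟩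
  inv_mem' := by
    intro a ha
    refine ⟨P.inv_mem ha.1, ?_⟩
    rw [Equiv.Perm.inv_eq_iff_eq]
    exact ha.2.symm

/-- The conjugate subgroup `xVx⁻¹`. -/
def conjSub {G : Type*} [Group G] (x : G) (V : Subgroup G) : Subgroup G :=
  V.map (MulAut.conj x).toMonoidHom

/-- The vertex `ξ|_m` on the ray towards the end represented by `ξ`. -/
def ray (q : ℕ) [NeZero q] (ξ : ℤ → Fin q) (N : ℤ) (hξ : ∀ i : ℤ, i < N → (ξ i : ℕ) = 0)
    (m : ℤ) : Vertex q where
  level := m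
  lab := fun i => if m < i then 0 else ξ i
  zero_gt := by intro i hi; simp [hi]
  bdd := by
    refine ⟨N, fun i hi => ?_⟩
    by_cases h : m < i
    · simp [h]
    · simp [h, hξ i hi]

/-- The contraction group of `x` in `P`. -/
def conSet {q : ℕ} (P : Subgroup (Equiv.Perm (Vertex q))) (x : Equiv.Perm (Vertex q)) :
    Set (Equiv.Perm (Vertex q)) :=
  {g | g ∈ P ∧ ∀ v : Vertex q, ∃ N : ℕ, ∀ n : ℕ, N ≤ n → (x ^ n * g * (x ^ n)⁻¹) v = v}


/-- `c` is a `P`-labelling of `T_{q+1}` with distinguished bi-infinite path `vp`: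
each `c v` is a bijection from the directed edges out of `v` (encoded as the
neighbours of `v`) to `{0, …, q}`; the edge towards the parent is labelled `q`;
along the path `vp` the downward edges are labelled `0`; and `P` contains, for
all `u₁, u₂`, an element carrying `u₁` to `u₂` and preserving the labels on the
rooted subtree of descendants of `u₁`. -/
def IsPLabelling {q : ℕ} [NeZero q] (P : Subgroup (Equiv.Perm (Vertex q)))
    (c : Vertex q → Vertex q → Fin (q + 1)) (vp : ℤ → Vertex q) : Prop :=
  (∀ v : Vertex q, ∀ j : Fin (q + 1),
      ∃! w : Vertex q, (Vertex.parent w = v ∨ w = Vertex.parent v) ∧ c v w = j) ∧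
  (∀ v : Vertex q, (c v (Vertex.parent v) : ℕ) = q) ∧
  (∀ n : ℤ, Vertex.parent (vp (n + 1)) = vp n) ∧
  (∀ n : ℤ, (c (vp n) (vp (n + 1)) : ℕ) = 0) ∧
  (∀ u₁ u₂ : Vertex q, ∃ x, x ∈ P ∧ x u₁ = u₂ ∧
    ∀ w w' : Vertex q, Vertex.Descendant u₁ w → Vertex.Descendant u₁ w' →
      (Vertex.parent w = w' ∨ Vertex.parent w' = w) → c (x w) (x w') = c w w')

open Classical in
/-- The standard labelling of `T_{q+1}`: the edge from `v` to its child `vj` is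
labelled `j` and the edge towards the parent is labelled `q`. -/
noncomputable def stdLabel (q : ℕ) [NeZero q] : Vertex q → Vertex q → Fin (q + 1) :=
  fun v w =>
    if Vertex.parent w = v then Fin.castLE (Nat.le_succ q) (w.lab (v.level + 1))
    else Fin.last q

/-- Convert an edge label in `{0,…,q}` known to be `< q` into a letter in `{0,…,q-1}`. -/
def toFinQ {q : ℕ} [NeZero q] (j : Fin (q + 1)) : Fin q :=
  if h : (j : ℕ) < q then ⟨j, h⟩ else ⟨0, Nat.pos_of_ne_zero (NeZero.ne q)⟩

/-- The string of labels read along the downward path of length `d` ending at `w`. -/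
def labelString {q : ℕ} [NeZero q] (c : Vertex q → Vertex q → Fin (q + 1)) :
    Vertex q → ℕ → List (Fin q)
  | _, 0 => []
  | w, (d + 1) => labelString c (Vertex.parent w) d ++ [toFinQ (c (Vertex.parent w) w)]

/-- The isomorphism `φ^c_v : T_v → T_{q,q}` given by a labelling `c`: a descendant `w`
of `v` is sent to the string of labels along the path from `v` down to `w`. -/
def phiStr {q : ℕ} [NeZero q] (c : Vertex q → Vertex q → Fin (q + 1)) (v w : Vertex q) :
    List (Fin q) :=
  labelString c w ((w.level - v.level).toNat)

/-- The set `P|_v = {φ^c_{x(v)} ∘ x ∘ (φ^c_v)⁻¹ : x ∈ P}` of sections of elements of `P`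
at the vertex `v`, with respect to the labelling `c`. -/
def sectSet {q : ℕ} [NeZero q] (P : Subgroup (Equiv.Perm (Vertex q)))
    (c : Vertex q → Vertex q → Fin (q + 1)) (v : Vertex q) :
    Set (Equiv.Perm (List (Fin q))) :=
  {g | ∃ x, x ∈ P ∧ ∀ w : Vertex q, Vertex.Descendant v w →
        g (phiStr c v w) = phiStr c (x v) (x w)}

/-- The standard isomorphism `φ_v : T_v → T_{q,q}`: a descendant `w` of `v` of level `m`
is sent to the string `(w_{n+1}, …, w_m)` where `n` is the level of `v`. -/
def stdStr {q : ℕ} (v w : Vertex q) : List (Fin q) :=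
  (List.range (w.level - v.level).toNat).map fun k => w.lab (v.level + 1 + k)

/-- The set `{φ_{x(v)} ∘ x ∘ φ_v⁻¹ : x ∈ P}` with respect to the standard isomorphisms. -/
def stdSect {q : ℕ} [NeZero q] (P : Subgroup (Equiv.Perm (Vertex q))) (v : Vertex q) :
    Set (Equiv.Perm (List (Fin q))) :=
  {g | ∃ x, x ∈ P ∧ ∀ w : Vertex q, Vertex.Descendant v w →
        g (stdStr v w) = stdStr (x v) (x w)}

/-- `Isom(T_{q,q})`: the group of permutations of the set of finite strings over
`{0,…,q-1}` preserving length and the prefix relation. -/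
def RIsom (q : ℕ) : Subgroup (Equiv.Perm (List (Fin q))) where
  carrier := {g | (∀ l : List (Fin q), (g l).length = l.length) ∧
    ∀ l₁ l₂ : List (Fin q), l₁ <+: l₂ → g l₁ <+: g l₂}
  one_mem' := ⟨fun _ => rfl, fun _ _ h => h⟩
  mul_mem' := by
    intro a b ha hb
    constructor
    · intro l
      rw [Equiv.Perm.mul_apply, ha.1, hb.1]
    · intro l₁ l₂ h
      rw [Equiv.Perm.mul_apply, Equiv.Perm.mul_apply]
      exact ha.2 _ _ (hb.2 _ _ h)
  inv_mem' := by
    intro a ha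
    have hlen : ∀ l : List (Fin q), (a⁻¹ l).length = l.length := by
      intro l
      have h := ha.1 (a⁻¹ l)
      rw [show a (a⁻¹ l) = l from Equiv.apply_symm_apply a l] at h
      exact h.symm
    refine ⟨hlen, ?_⟩
    intro l₁ l₂ h
    have htake : List.take (a⁻¹ l₁).length (a⁻¹ l₂) <+: a⁻¹ l₂ := List.take_prefix _ _
    have h2 : a (List.take (a⁻¹ l₁).length (a⁻¹ l₂)) <+: a (a⁻¹ l₂) := ha.2 _ _ htake
    rw [show a (a⁻¹ l₂) = l₂ from Equiv.apply_symm_apply a l₂] at h2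
    have hle : l₁.length ≤ l₂.length := h.length_le
    have hlen3 : (a (List.take (a⁻¹ l₁).length (a⁻¹ l₂))).length = l₁.length := by
      rw [ha.1, List.length_take, hlen, hlen]
      omega
    have hpre : a (List.take (a⁻¹ l₁).length (a⁻¹ l₂)) <+: l₁ :=
      List.prefix_of_prefix_length_le h2 h (le_of_eq hlen3)
    have heq : a (List.take (a⁻¹ l₁).length (a⁻¹ l₂)) = l₁ := hpre.eq_of_length hlen3
    have heq2 : List.take (a⁻¹ l₁).length (a⁻¹ l₂) = a⁻¹ l₁ := by
      apply a.injective
      rw [heq, show a (a⁻¹ l₁) = l₁ from Equiv.apply_symm_apply a l₁]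
    rw [← heq2]
    exact List.take_prefix _ _

/-- A subgroup of `Isom(T_{q,q})` is self-replicating if it is self-similar, transitive
on level 1, and all the section homomorphisms `g ↦ g|_w` are surjective. -/
def SelfReplicating {q : ℕ} (G : Subgroup (Equiv.Perm (List (Fin q)))) : Prop :=
  (∀ w : List (Fin q), ∀ g, g ∈ G → g w = w →
      ∃ g', g' ∈ G ∧ ∀ v : List (Fin q), g (w ++ v) = w ++ g' v) ∧
  (∀ j j' : Fin q, ∃ g ∈ G, g [j] = [j']) ∧
  (∀ w : List (Fin q), ∀ g', g' ∈ G →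
      ∃ g, g ∈ G ∧ g w = w ∧ ∀ v : List (Fin q), g (w ++ v) = w ++ g' v)

/-- The stabiliser of the string `w` in `G ≤ Isom(T_{q,q})`, as a subgroup of `G`. -/
def rstab {q : ℕ} (G : Subgroup (Equiv.Perm (List (Fin q)))) (w : List (Fin q)) :
    Subgroup G where
  carrier := {g | (g : Equiv.Perm (List (Fin q))) w = w}
  one_mem' := rfl
  mul_mem' := by
    intro a b ha hb
    show ((a * b : G) : Equiv.Perm (List (Fin q))) w = w
    rw [Subgroup.coe_mul, Equiv.Perm.mul_apply]
    rw [show (b : Equiv.Perm (List (Fin q))) w = w from hb,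
      show (a : Equiv.Perm (List (Fin q))) w = w from ha]
  inv_mem' := by
    intro a ha
    show ((a⁻¹ : G) : Equiv.Perm (List (Fin q))) w = w
    rw [Subgroup.coe_inv, Equiv.Perm.inv_eq_iff_eq]
    exact (show (a : Equiv.Perm (List (Fin q))) w = w from ha).symm

/-!
If `x ∈ P` moves `v` to a child, then `x⁻¹ v` is the parent of `v`, because `x` commutes with
taking parents. As every element of `P` commutes with taking parents and maps the children of
a vertex bijectively onto the children of its image, the `P`-orbit of `v` is then closed under
taking parents and children. Any two vertices have a common ancestor, so this orbit is the whole
tree.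
-/

namespace Vertex

variable {q : ℕ} [NeZero q]

lemma lab_eq_zero_of_level_lt (v : Vertex q) {i : ℤ} (hi : v.level < i) : v.lab i = 0 :=
  Fin.ext (v.zero_gt i hi)

@[simp]
lemma parent_child (v : Vertex q) (j : Fin q) : parent (child v j) = v := by
  refine Vertex.ext (by simp [parent, child]) (funext fun i => ?_)
  simp only [parent, child]
  grind [lab_eq_zero_of_level_lt]

lemma child_parent_lab (w : Vertex q) : child (parent w) (w.lab w.level) = w := by
  refine Vertex.ext (by simp [parent, child]) (funext fun i => ?_)
  simp only [parent, child]
  grind [lab_eq_zero_of_level_lt]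

omit [NeZero q] in
lemma child_injective (v : Vertex q) : Function.Injective (child v) := fun i j hij => by
  simpa [child] using congrArg (fun w : Vertex q => w.lab (v.level + 1)) hij

@[simp]
lemma trunc_level (v : Vertex q) : trunc v v.level = v := by
  refine Vertex.ext rfl (funext fun i => ?_)
  simp only [trunc]
  split_ifs with h
  · exact (v.lab_eq_zero_of_level_lt h).symm
  · rfl

lemma parent_trunc (v : Vertex q) (m : ℤ) : parent (trunc v m) = trunc v (m - 1) := by
  refine Vertex.ext rfl (funext fun i => ?_)
  simp only [parent, trunc]
  grind

lemma child_trunc (w : Vertex q) (m : ℤ) :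
    child (trunc w m) (w.lab (m + 1)) = trunc w (m + 1) := by
  refine Vertex.ext rfl (funext fun i => ?_)
  simp only [child, trunc]
  grind

lemma exists_trunc_eq_trunc (v w : Vertex q) :
    ∃ m, m ≤ v.level ∧ m ≤ w.level ∧ trunc v m = trunc w m := by
  obtain ⟨M, hM⟩ := v.bdd
  obtain ⟨N, hN⟩ := w.bdd
  refine ⟨min (min v.level w.level) (min M N - 1), by omega, by omega, ?_⟩
  refine Vertex.ext rfl (funext fun i => ?_)
  simp only [trunc]
  split_ifs with h
  · rfl
  · exact Fin.ext ((hM i (by omega)).trans (hN i (by omega)).symm)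

lemma trunc_mem_of_parent_mem {S : Set (Vertex q)} (hparent : ∀ u ∈ S, parent u ∈ S)
    {v : Vertex q} (hv : v ∈ S) {m : ℤ} (hm : m ≤ v.level) : trunc v m ∈ S := by
  induction m, hm using Int.leInductionDown with
  | base => simpa using hv
  | pred n _ ih => simpa [parent_trunc] using hparent _ ih

lemma trunc_mem_of_child_mem {S : Set (Vertex q)} (hchild : ∀ u ∈ S, ∀ j, child u j ∈ S)
    {w : Vertex q} {m : ℤ} (hm : trunc w m ∈ S) {n : ℤ} (hmn : m ≤ n) : trunc w n ∈ S := by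
  induction n, hmn using Int.leInduction with
  | base => exact hm
  | succ n _ ih => simpa [child_trunc] using hchild _ ih (w.lab (n + 1))

theorem eq_univ_of_parent_mem_of_child_mem {S : Set (Vertex q)} {v : Vertex q} (hv : v ∈ S)
    (hparent : ∀ u ∈ S, parent u ∈ S) (hchild : ∀ u ∈ S, ∀ j, child u j ∈ S) :
    S = Set.univ := by
  refine Set.eq_univ_of_forall fun w => ?_
  obtain ⟨m, hmv, hmw, hvw⟩ := exists_trunc_eq_trunc v w
  have hwm : trunc w m ∈ S := hvw ▸ trunc_mem_of_parent_mem hparent hv hmv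
  simpa using trunc_mem_of_child_mem hchild hwm hmw

end Vertex

open Vertex MulAction

variable {q : ℕ} [NeZero q]

lemma exists_apply_child_eq_child {x : Equiv.Perm (Vertex q)} (hx : x ∈ IsomOmega q)
    (v : Vertex q) (j : Fin q) : ∃ i, x (child v i) = child (x v) j := by
  set f : Fin q → Fin q := fun i => (x (child v i)).lab (x (child v i)).level
  have hchild : ∀ i, x (child v i) = child (x v) (f i) := fun i => by
    conv_lhs => rw [← child_parent_lab (x (child v i))]
    rw [← hx, parent_child]
  have hf : Function.Injective f := fun i i' hii' =>
    child_injective v (x.injective (by rw [hchild i, hchild i']; exact congrArg _ hii'))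
  obtain ⟨i, rfl⟩ := Finite.surjective_of_injective hf j
  exact ⟨i, hchild i⟩

variable {P : Subgroup (Equiv.Perm (Vertex q))}

lemma parent_mem_orbit_of_child_mem (hle : P ≤ IsomOmega q) {v : Vertex q} {j : Fin q}
    (hj : child v j ∈ orbit P v) : parent v ∈ orbit P v := by
  obtain ⟨x, hx : (x : Equiv.Perm (Vertex q)) v = child v j⟩ := hj
  refine mem_orbit_symm.mp ⟨x, (?_ : (x : Equiv.Perm (Vertex q)) (parent v) = v)⟩
  rw [hle x.2, hx, parent_child]

lemma parent_mem_orbit (hle : P ≤ IsomOmega q) {v : Vertex q} (hv : parent v ∈ orbit P v)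
    {u : Vertex q} (hu : u ∈ orbit P v) : parent u ∈ orbit P v := by
  obtain ⟨x, rfl⟩ := hu
  have := mem_orbit_of_mem_orbit x hv
  rwa [Subgroup.smul_def, Equiv.Perm.smul_def, hle x.2] at this

lemma child_mem_orbit (hle : P ≤ IsomOmega q) {v : Vertex q} (hv : ∀ j, child v j ∈ orbit P v)
    {u : Vertex q} (hu : u ∈ orbit P v) (j : Fin q) : child u j ∈ orbit P v := by
  obtain ⟨x, rfl⟩ := hu
  obtain ⟨i, hi⟩ := exists_apply_child_eq_child (hle x.2) v j
  have := mem_orbit_of_mem_orbit x (hv i)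
  rwa [Subgroup.smul_def, Equiv.Perm.smul_def, hi] at this

end Scale

open Scale in
theorem statement_9_general (q : ℕ) [NeZero q]
    (P : Subgroup (Equiv.Perm (Vertex q)))
    (hle : P ≤ IsomOmega q)
    (hclosed : IsClosed (P : Set (Equiv.Perm (Vertex q))))
    (v : Vertex q) (h : ∀ j : Fin q, ∃ x ∈ P, x v = Vertex.child v j) :
    IsScaleGroup P := by
  have hchild : ∀ j, Vertex.child v j ∈ MulAction.orbit P v := fun j => by
    obtain ⟨x, hx, hxv⟩ := h j
    exact ⟨⟨x, hx⟩, hxv⟩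
  have hparent := parent_mem_orbit_of_child_mem hle (hchild 0)
  have horbit : MulAction.orbit P v = Set.univ :=
    Vertex.eq_univ_of_parent_mem_of_child_mem (MulAction.mem_orbit_self v)
      (fun _ hu => parent_mem_orbit hle hparent hu) (fun _ hu => child_mem_orbit hle hchild hu)
  have := (MulAction.isPretransitive_iff_orbit_eq_univ v).mpr horbit
  refine ⟨hle, hclosed, fun u w => ?_⟩
  obtain ⟨⟨x, hx⟩, hxuw⟩ := MulAction.exists_smul_eq P u w
  exact ⟨x, hx, hxuw⟩

open Scale in
/-- A closed subgroup of `Isom(T_{q+1})_ω` containing, for some vertex `v`,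
elements moving `v` to each of its children, is vertex-transitive, i.e. a scale group. -/
theorem statement_9 (q : ℕ) [NeZero q] (hq : 2 ≤ q)
    (P : Subgroup (Equiv.Perm (Vertex q)))
    (hle : P ≤ IsomOmega q)
    (hclosed : IsClosed (P : Set (Equiv.Perm (Vertex q))))
    (v : Vertex q) (h : ∀ j : Fin q, ∃ x ∈ P, x v = Vertex.child v j) :
    IsScaleGroup P :=
  statement_9_general q P hle hclosed v h
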